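/- arXiv:2407.18708 — 7 statements merged into one kernel-verified Lean document; each statement's English description precedes it below -/
import Mathlib

section
/- Let C be an abelian category and let X and Y be cochain complexes over C indexed by ℤ. If X is a bounded-above complex of projectives (i.e. there is m ∈ ℤ with X^k = 0 for all k > m, and X^k is projective for every k ∈ ℤ), then the map Hom_{K(C)}(X, Y) → Hom_{D(C)}(X, Y) induced by the localization functor from the homotopy category K(C) to the derived category D(C) is bijective. Dually, the same conclusion holds if instead Y is a bounded-below complex of injectives (Y^k = 0 for all k below some bound, and Y^k injective for every k). -/
open CategoryTheory CategoryTheory.Limits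

namespace Stmt0Aux

variable {C : Type*} [Category C] [Abelian C]

/-! ### Null-homotopies: bounded-above projective complexes into acyclic complexes -/

section Proj

variable {X Z : CochainComplex C ℤ} (m : ℤ)
  (hP : ∀ k : ℤ, Projective (X.X k)) (hZ : ∀ n : ℤ, Z.ExactAt n) (f : X ⟶ Z)

open Classical in
/-- The lifted morphism at stage `k` of the downward induction. -/
noncomputable def lifted (k : ℕ) (g : ∀ i j : ℤ, X.X i ⟶ Z.X j) :
    X.X (m - (k:ℤ)) ⟶ Z.X (m - (k:ℤ) - 1) :=
  if h0 : (f.f (m - (k:ℤ)) - X.d (m - (k:ℤ)) (m - (k:ℤ) + 1) ≫ g (m - (k:ℤ) + 1) (m - (k:ℤ)))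
      ≫ Z.d (m - (k:ℤ)) (m - (k:ℤ) + 1) = 0 then
    haveI := hP (m - (k:ℤ))
    ((Z.exactAt_iff' (m - (k:ℤ) - 1) (m - (k:ℤ)) (m - (k:ℤ) + 1)
        (by simp) (by simp)).1 (hZ (m - (k:ℤ)))).liftFromProjective _ h0
  else 0

/-- The partial homotopies, by downward induction. -/
noncomputable def G : ℕ → ∀ i j : ℤ, X.X i ⟶ Z.X j
  | 0 => fun _ _ => 0
  | (k+1) => fun i j =>
      if h : i = m - (k:ℤ) ∧ j = m - (k:ℤ) - 1 then
        eqToHom (congrArg X.X h.1) ≫ lifted m hP hZ f k (G k) ≫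
          eqToHom (congrArg Z.X h.2).symm
      else G k i j

lemma G_shape (k : ℕ) (i j : ℤ) (hij : j + 1 ≠ i) : G m hP hZ f k i j = 0 := by
  induction k with
  | zero => rfl
  | succ k ih =>
      dsimp [G]
      rw [dif_neg, ih]
      rintro ⟨rfl, rfl⟩
      omega

lemma G_stable (k : ℕ) (i j : ℤ) (hi : m - (k:ℤ) < i) :
    G m hP hZ f (k+1) i j = G m hP hZ f k i j := by
  dsimp [G]
  rw [dif_neg]
  rintro ⟨rfl, -⟩
  omega

lemma G_agree {k k' : ℕ} (hkk : k ≤ k') (i j : ℤ) (hi : m - (k:ℤ) < i) :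
    G m hP hZ f k' i j = G m hP hZ f k i j := by
  induction k', hkk using Nat.le_induction with
  | base => rfl
  | succ k'' hk ih =>
      rw [G_stable m hP hZ f k'' i j (by push_cast; omega), ih]

lemma G_comm (hX : ∀ n : ℤ, m < n → IsZero (X.X n)) (k : ℕ) (i : ℤ)
    (hi : m + 1 - (k:ℤ) ≤ i) :
    f.f i = X.d i (i+1) ≫ G m hP hZ f k (i+1) i +
      G m hP hZ f k i (i-1) ≫ Z.d (i-1) i := by
  induction k generalizing i with
  | zero => exact (hX i (by push_cast at hi; omega)).eq_of_src _ _
  | succ k ih =>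
      push_cast at hi
      rcases (by omega : m - (k:ℤ) < i ∨ i = m - (k:ℤ)) with hik | hik
      · rw [G_stable m hP hZ f k (i+1) i (by omega), G_stable m hP hZ f k i (i-1) hik]
        exact ih i (by omega)
      · subst hik
        have hcomm := ih (m - (k:ℤ) + 1) (by omega)
        rw [show m - (k:ℤ) + 1 - 1 = m - (k:ℤ) by omega] at hcomm
        have h0 : (f.f (m - (k:ℤ)) - X.d (m - (k:ℤ)) (m - (k:ℤ) + 1) ≫
            G m hP hZ f k (m - (k:ℤ) + 1) (m - (k:ℤ)))
              ≫ Z.d (m - (k:ℤ)) (m - (k:ℤ) + 1) = 0 := by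
          rw [Preadditive.sub_comp, Category.assoc, HomologicalComplex.Hom.comm f, hcomm,
            Preadditive.comp_add, add_sub_cancel_right, ← Category.assoc,
            HomologicalComplex.d_comp_d, zero_comp]
        have h2 : G m hP hZ f (k+1) (m - (k:ℤ)) (m - (k:ℤ) - 1) =
            lifted m hP hZ f k (G m hP hZ f k) := by
          dsimp [G]
          simp
        have h3 : lifted m hP hZ f k (G m hP hZ f k) ≫ Z.d (m - (k:ℤ) - 1) (m - (k:ℤ)) =
            f.f (m - (k:ℤ)) - X.d (m - (k:ℤ)) (m - (k:ℤ) + 1) ≫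
              G m hP hZ f k (m - (k:ℤ) + 1) (m - (k:ℤ)) := by
          haveI := hP (m - (k:ℤ))
          rw [show lifted m hP hZ f k (G m hP hZ f k) = _ from dif_pos h0]
          exact ShortComplex.Exact.liftFromProjective_comp _ _ _
        rw [G_stable m hP hZ f k (m - (k:ℤ) + 1) (m - (k:ℤ)) (by omega), h2, h3]
        abel

/-- A chain map from a bounded-above complex of projectives to an acyclic complex
is null-homotopic. -/
noncomputable def homotopyToZero (hX : ∀ n : ℤ, m < n → IsZero (X.X n)) :
    Homotopy f 0 where
  hom i j := G m hP hZ f (m + 1 - i).toNat i j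
  zero i j hij := G_shape m hP hZ f _ i j (fun h => hij h)
  comm i := by
    have key := G_comm m hP hZ f hX ((m + 1 - i).toNat) i (by omega)
    rw [dNext_eq _ (show (ComplexShape.up ℤ).Rel i (i+1) from rfl),
      prevD_eq _ (show (ComplexShape.up ℤ).Rel (i-1) i from by simp [ComplexShape.up])]
    rw [show G m hP hZ f ((m + 1 - (i+1)).toNat) (i+1) i =
        G m hP hZ f ((m + 1 - i).toNat) (i+1) i from
      (G_agree m hP hZ f (k := (m + 1 - (i+1)).toNat) (k' := (m + 1 - i).toNat)
        (by omega) (i+1) i (by omega)).symm]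
    simpa using key

end Proj

/-! ### Dual: acyclic complexes into bounded-below injective complexes -/

section Inj

variable {Z Y : CochainComplex C ℤ} (m : ℤ)
  (hI : ∀ k : ℤ, Injective (Y.X k)) (hZ : ∀ n : ℤ, Z.ExactAt n) (f : Z ⟶ Y)

open Classical in
/-- The descended morphism at stage `k` of the upward induction. -/
noncomputable def desced (k : ℕ) (g : ∀ i j : ℤ, Z.X i ⟶ Y.X j) :
    Z.X (m + (k:ℤ) + 1) ⟶ Y.X (m + (k:ℤ)) :=
  if h0 : Z.d (m + (k:ℤ) - 1) (m + (k:ℤ)) ≫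
      (f.f (m + (k:ℤ)) - g (m + (k:ℤ)) (m + (k:ℤ) - 1) ≫ Y.d (m + (k:ℤ) - 1) (m + (k:ℤ))) = 0 then
    haveI := hI (m + (k:ℤ))
    ((Z.exactAt_iff' (m + (k:ℤ) - 1) (m + (k:ℤ)) (m + (k:ℤ) + 1)
        (by simp) (by simp)).1 (hZ (m + (k:ℤ)))).descToInjective _ h0
  else 0

/-- The partial homotopies, by upward induction. -/
noncomputable def G' : ℕ → ∀ i j : ℤ, Z.X i ⟶ Y.X j
  | 0 => fun _ _ => 0
  | (k+1) => fun i j =>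
      if h : i = m + (k:ℤ) + 1 ∧ j = m + (k:ℤ) then
        eqToHom (congrArg Z.X h.1) ≫ desced m hI hZ f k (G' k) ≫
          eqToHom (congrArg Y.X h.2).symm
      else G' k i j

lemma G'_shape (k : ℕ) (i j : ℤ) (hij : j + 1 ≠ i) : G' m hI hZ f k i j = 0 := by
  induction k with
  | zero => rfl
  | succ k ih =>
      dsimp [G']
      rw [dif_neg, ih]
      rintro ⟨rfl, rfl⟩
      omega

lemma G'_stable (k : ℕ) (i j : ℤ) (hi : i < m + (k:ℤ) + 1) :
    G' m hI hZ f (k+1) i j = G' m hI hZ f k i j := by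
  dsimp [G']
  rw [dif_neg]
  rintro ⟨rfl, -⟩
  omega

lemma G'_agree {k k' : ℕ} (hkk : k ≤ k') (i j : ℤ) (hi : i < m + (k:ℤ) + 1) :
    G' m hI hZ f k' i j = G' m hI hZ f k i j := by
  induction k', hkk using Nat.le_induction with
  | base => rfl
  | succ k'' hk ih =>
      rw [G'_stable m hI hZ f k'' i j (by push_cast; omega), ih]

lemma G'_comm (hY : ∀ n : ℤ, n < m → IsZero (Y.X n)) (k : ℕ) (i : ℤ)
    (hi : i ≤ m - 1 + (k:ℤ)) :
    f.f i = Z.d i (i+1) ≫ G' m hI hZ f k (i+1) i +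
      G' m hI hZ f k i (i-1) ≫ Y.d (i-1) i := by
  induction k generalizing i with
  | zero => exact (hY i (by push_cast at hi; omega)).eq_of_tgt _ _
  | succ k ih =>
      push_cast at hi
      rcases (by omega : i < m + (k:ℤ) ∨ i = m + (k:ℤ)) with hik | hik
      · rw [G'_stable m hI hZ f k (i+1) i (by omega), G'_stable m hI hZ f k i (i-1) (by omega)]
        exact ih i (by omega)
      · subst hik
        have hcomm := ih (m + (k:ℤ) - 1) (by omega)
        rw [show m + (k:ℤ) - 1 + 1 = m + (k:ℤ) by omega] at hcomm
        have h0 : Z.d (m + (k:ℤ) - 1) (m + (k:ℤ)) ≫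
            (f.f (m + (k:ℤ)) - G' m hI hZ f k (m + (k:ℤ)) (m + (k:ℤ) - 1) ≫
              Y.d (m + (k:ℤ) - 1) (m + (k:ℤ))) = 0 := by
          rw [Preadditive.comp_sub, ← HomologicalComplex.Hom.comm f, hcomm,
            Preadditive.add_comp]
          simp only [Category.assoc]
          rw [HomologicalComplex.d_comp_d, comp_zero, add_zero, sub_self]
        have h2 : G' m hI hZ f (k+1) (m + (k:ℤ) + 1) (m + (k:ℤ)) =
            desced m hI hZ f k (G' m hI hZ f k) := by
          dsimp [G']
          simp
        have h3 : Z.d (m + (k:ℤ)) (m + (k:ℤ) + 1) ≫ desced m hI hZ f k (G' m hI hZ f k) =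
            f.f (m + (k:ℤ)) - G' m hI hZ f k (m + (k:ℤ)) (m + (k:ℤ) - 1) ≫
              Y.d (m + (k:ℤ) - 1) (m + (k:ℤ)) := by
          haveI := hI (m + (k:ℤ))
          rw [show desced m hI hZ f k (G' m hI hZ f k) = _ from dif_pos h0]
          exact ShortComplex.Exact.comp_descToInjective
            ((Z.exactAt_iff' (m + (k:ℤ) - 1) (m + (k:ℤ)) (m + (k:ℤ) + 1)
              (by simp) (by simp)).1 (hZ (m + (k:ℤ)))) _ h0
        rw [G'_stable m hI hZ f k (m + (k:ℤ)) (m + (k:ℤ) - 1) (by omega), h2, h3]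
        abel

/-- A chain map from an acyclic complex to a bounded-below complex of injectives
is null-homotopic. -/
noncomputable def homotopyToZero' (hY : ∀ n : ℤ, n < m → IsZero (Y.X n)) :
    Homotopy f 0 where
  hom i j := G' m hI hZ f (i + 1 - m).toNat i j
  zero i j hij := G'_shape m hI hZ f _ i j (fun h => hij h)
  comm i := by
    have key := G'_comm m hI hZ f hY ((i + 1 - m).toNat) i (by omega)
    rw [dNext_eq _ (show (ComplexShape.up ℤ).Rel i (i+1) from rfl),
      prevD_eq _ (show (ComplexShape.up ℤ).Rel (i-1) i from by simp [ComplexShape.up])]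
    rw [show G' m hI hZ f ((i + 1 + 1 - m).toNat) (i+1) i =
        G' m hI hZ f ((i + 1 - m).toNat) (i+1) i from
      G'_agree m hI hZ f (k := (i + 1 - m).toNat) (k' := (i + 1 + 1 - m).toNat)
        (by omega) (i+1) i (by omega)]
    simpa using key

end Inj

/-! ### Orthogonality in a pretriangulated category -/

section Triang

open Pretriangulated

variable {D : Type*} [Category D] [Preadditive D] [HasZeroObject D] [HasShift D ℤ]
  [∀ n : ℤ, (CategoryTheory.shiftFunctor D n).Additive] [Pretriangulated D]
  (S : ObjectProperty D) [S.IsTriangulated]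

lemma bij_postcomp (Q : D) (hQ : ∀ (N : D), S N → ∀ (φ : Q ⟶ N), φ = 0)
    {A B : D} (s : A ⟶ B) (hs : S.trW s) :
    Function.Bijective (fun g : Q ⟶ A => g ≫ s) := by
  obtain ⟨N, gN, hN, hT, mem⟩ := hs
  constructor
  · intro g₁ g₂ hg
    have hg' : g₁ ≫ s = g₂ ≫ s := hg
    obtain ⟨g, hgg⟩ := Triangle.coyoneda_exact₂ _ (inv_rot_of_distTriang _ hT) (g₁ - g₂)
      (show (g₁ - g₂) ≫ s = 0 by rw [Preadditive.sub_comp, hg', sub_self])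
    rw [hQ _ (S.le_shift (-1) N mem) g] at hgg
    exact sub_eq_zero.mp (hgg.trans (Limits.zero_comp))
  · intro t
    obtain ⟨g, hgg⟩ := Triangle.coyoneda_exact₂ _ hT t (hQ _ mem (t ≫ gN))
    exact ⟨g, hgg.symm⟩

lemma bij_precomp (Q : D) (hQ : ∀ (N : D), S N → ∀ (φ : N ⟶ Q), φ = 0)
    {A B : D} (s : A ⟶ B) (hs : S.trW s) :
    Function.Bijective (fun g : B ⟶ Q => s ≫ g) := by
  obtain ⟨N, gN, hN, hT, mem⟩ := hs
  constructor
  · intro g₁ g₂ hg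
    have hg' : s ≫ g₁ = s ≫ g₂ := hg
    obtain ⟨g, hgg⟩ := Triangle.yoneda_exact₂ _ hT (g₁ - g₂)
      (show s ≫ (g₁ - g₂) = 0 by rw [Preadditive.comp_sub, hg', sub_self])
    rw [hQ _ mem g] at hgg
    exact sub_eq_zero.mp (hgg.trans (Limits.comp_zero))
  · intro t
    obtain ⟨g, hgg⟩ := Triangle.yoneda_exact₂ _ (inv_rot_of_distTriang _ hT) t
      (hQ _ (S.le_shift (-1) N mem) _)
    exact ⟨g, hgg.symm⟩

end Triang

/-! ### Orthogonality to acyclic complexes -/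

lemma hom_to_acyclic_eq_zero (X : CochainComplex C ℤ) (m : ℤ)
    (hX : ∀ k : ℤ, m < k → IsZero (X.X k)) (hP : ∀ k : ℤ, Projective (X.X k))
    (N : HomotopyCategory C (ComplexShape.up ℤ))
    (hN : (HomotopyCategory.subcategoryAcyclic C) N)
    (φ : (HomotopyCategory.quotient C (ComplexShape.up ℤ)).obj X ⟶ N) : φ = 0 := by
  obtain ⟨Z⟩ := N
  have hZ : ∀ n : ℤ, Z.ExactAt n :=
    (HomotopyCategory.quotient_obj_mem_subcategoryAcyclic_iff_exactAt Z).1 hN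
  obtain ⟨f, rfl⟩ := (HomotopyCategory.quotient C (ComplexShape.up ℤ)).map_surjective φ
  have : (HomotopyCategory.quotient C (ComplexShape.up ℤ)).map f =
      (HomotopyCategory.quotient C (ComplexShape.up ℤ)).map 0 :=
    HomotopyCategory.eq_of_homotopy f 0 (homotopyToZero m hP hZ f hX)
  rw [this, Functor.map_zero]
  rfl

lemma hom_from_acyclic_eq_zero (Y : CochainComplex C ℤ) (m : ℤ)
    (hY : ∀ k : ℤ, k < m → IsZero (Y.X k)) (hI : ∀ k : ℤ, Injective (Y.X k))
    (N : HomotopyCategory C (ComplexShape.up ℤ))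
    (hN : (HomotopyCategory.subcategoryAcyclic C) N)
    (φ : N ⟶ (HomotopyCategory.quotient C (ComplexShape.up ℤ)).obj Y) : φ = 0 := by
  obtain ⟨Z⟩ := N
  have hZ : ∀ n : ℤ, Z.ExactAt n :=
    (HomotopyCategory.quotient_obj_mem_subcategoryAcyclic_iff_exactAt Z).1 hN
  obtain ⟨f, rfl⟩ := (HomotopyCategory.quotient C (ComplexShape.up ℤ)).map_surjective φ
  have : (HomotopyCategory.quotient C (ComplexShape.up ℤ)).map f =
      (HomotopyCategory.quotient C (ComplexShape.up ℤ)).map 0 :=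
    HomotopyCategory.eq_of_homotopy f 0 (homotopyToZero' m hI hZ f hY)
  rw [this, Functor.map_zero]
  rfl

end Stmt0Aux

/-- If `X` is a bounded-above cochain complex of projectives (or, dually, `Y` is a
bounded-below cochain complex of injectives), then the map on Hom-groups induced by the
localization functor from the homotopy category to the derived category is bijective. -/
theorem stmt_0 {C : Type*} [Category C] [Abelian C] [HasDerivedCategory C]
    (X Y : CochainComplex C ℤ)
    (h : ((∃ m : ℤ, ∀ k : ℤ, m < k → IsZero (X.X k)) ∧ (∀ k : ℤ, Projective (X.X k))) ∨
         ((∃ m : ℤ, ∀ k : ℤ, k < m → IsZero (Y.X k)) ∧ (∀ k : ℤ, Injective (Y.X k)))) :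
    Function.Bijective
      (fun (f : (HomotopyCategory.quotient C (ComplexShape.up ℤ)).obj X ⟶
          (HomotopyCategory.quotient C (ComplexShape.up ℤ)).obj Y) =>
        DerivedCategory.Qh.map f) := by
  rcases h with ⟨⟨m, hX⟩, hP⟩ | ⟨⟨m, hY⟩, hI⟩
  · have hortho : ∀ (N : HomotopyCategory C (ComplexShape.up ℤ)),
        (HomotopyCategory.subcategoryAcyclic C) N →
        ∀ (φ : (HomotopyCategory.quotient C (ComplexShape.up ℤ)).obj X ⟶ N), φ = 0 :=
      fun N hN φ => Stmt0Aux.hom_to_acyclic_eq_zero X m hX hP N hN φ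
    constructor
    · intro g₁ g₂ hg
      have hg' : DerivedCategory.Qh.map g₁ = DerivedCategory.Qh.map g₂ := hg
      rw [MorphismProperty.map_eq_iff_postcomp DerivedCategory.Qh
        (HomotopyCategory.subcategoryAcyclic C).trW] at hg'
      obtain ⟨Z, s, hs, fac⟩ := hg'
      exact (Stmt0Aux.bij_postcomp _ _ hortho s hs).1 fac
    · intro φ
      obtain ⟨ψ, hψ⟩ := Localization.exists_leftFraction DerivedCategory.Qh
        (HomotopyCategory.subcategoryAcyclic C).trW φ
      obtain ⟨g, hg⟩ := (Stmt0Aux.bij_postcomp _ _ hortho ψ.s ψ.hs).2 ψ.f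
      refine ⟨g, ?_⟩
      have hg' : g ≫ ψ.s = ψ.f := hg
      have : IsIso (DerivedCategory.Qh.map ψ.s) :=
        Localization.inverts DerivedCategory.Qh
          (HomotopyCategory.subcategoryAcyclic C).trW ψ.s ψ.hs
      show DerivedCategory.Qh.map g = φ
      rw [hψ, ← cancel_mono (DerivedCategory.Qh.map ψ.s),
        MorphismProperty.LeftFraction.map_comp_map_s, ← Functor.map_comp, hg']
  · have hortho : ∀ (N : HomotopyCategory C (ComplexShape.up ℤ)),
        (HomotopyCategory.subcategoryAcyclic C) N →
        ∀ (φ : N ⟶ (HomotopyCategory.quotient C (ComplexShape.up ℤ)).obj Y), φ = 0 :=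
      fun N hN φ => Stmt0Aux.hom_from_acyclic_eq_zero Y m hY hI N hN φ
    constructor
    · intro g₁ g₂ hg
      have hg' : DerivedCategory.Qh.map g₁ = DerivedCategory.Qh.map g₂ := hg
      rw [MorphismProperty.map_eq_iff_precomp DerivedCategory.Qh
        (HomotopyCategory.subcategoryAcyclic C).trW] at hg'
      obtain ⟨Z, s, hs, fac⟩ := hg'
      exact (Stmt0Aux.bij_precomp _ _ hortho s hs).1 fac
    · intro φ
      obtain ⟨ψ, hψ⟩ := Localization.exists_rightFraction DerivedCategory.Qh
        (HomotopyCategory.subcategoryAcyclic C).trW φ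
      obtain ⟨g, hg⟩ := (Stmt0Aux.bij_precomp _ _ hortho ψ.s ψ.hs).2 ψ.f
      refine ⟨g, ?_⟩
      have hg' : ψ.s ≫ g = ψ.f := hg
      have : IsIso (DerivedCategory.Qh.map ψ.s) :=
        Localization.inverts DerivedCategory.Qh
          (HomotopyCategory.subcategoryAcyclic C).trW ψ.s ψ.hs
      show DerivedCategory.Qh.map g = φ
      rw [hψ, ← cancel_epi (DerivedCategory.Qh.map ψ.s),
        MorphismProperty.RightFraction.map_s_comp_map, ← Functor.map_comp, hg']
end

section
/- Let C be an abelian category and X a cochain complex over C indexed by ℤ. Assume X is totally acyclic, meaning: (i) X is exact at every position n (the homology of X at every n vanishes), and (ii) for every projective object P of C, every n ∈ ℤ, and every morphism φ : X^n → P with φ ∘ d^{n−1} = 0, there exists ψ : X^{n+1} → P with ψ ∘ d^n = φ (i.e. the complex Hom(X, P) of abelian groups is exact). Then for every bounded cochain complex Q of projectives (Q^k = 0 for all but finitely many k, and each Q^k projective), every chain map f : X → Q is null-homotopic. -/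
open CategoryTheory CategoryTheory.Limits

/-- If `X` is a totally acyclic cochain complex (exact everywhere, and `Hom(X, P)` is exact
for every projective `P`), then every chain map from `X` to a bounded complex of projectives
is null-homotopic. -/
theorem stmt_1 {C : Type*} [Category C] [Abelian C]
    (X : CochainComplex C ℤ)
    (hac : ∀ n : ℤ, X.ExactAt n)
    (htot : ∀ (P : C), Projective P → ∀ (n : ℤ) (φ : X.X n ⟶ P),
      X.d (n - 1) n ≫ φ = 0 → ∃ ψ : X.X (n + 1) ⟶ P, X.d n (n + 1) ≫ ψ = φ)
    (Q : CochainComplex C ℤ)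
    (hQb : ∃ s : Finset ℤ, ∀ k ∉ s, IsZero (Q.X k))
    (hQp : ∀ k : ℤ, Projective (Q.X k))
    (f : X ⟶ Q) :
    Nonempty (Homotopy f 0) := by
  obtain ⟨s, hs⟩ := hQb
  -- upper bound for the support of `Q`
  obtain ⟨M, hM⟩ : ∃ M : ℤ, ∀ x ∈ s, x ≤ M := Finset.exists_le s
  -- lower bound for the support of `Q`
  obtain ⟨m', hm'⟩ : ∃ m' : ℤ, ∀ x ∈ s.image (fun x => -x), x ≤ m' :=
    Finset.exists_le _
  have hm : ∀ x ∈ s, -m' ≤ x := fun x hx => by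
    have := hm' (-x) (Finset.mem_image_of_mem _ hx); omega
  -- key inductive claim
  have key : ∀ n : ℕ, ∀ g : X ⟶ Q, (∀ k : ℤ, k < M + 1 - n → g.f k = 0) →
      Nonempty (Homotopy g 0) := by
    intro n
    induction n with
    | zero =>
      intro g hg
      have : g = 0 := by
        ext k
        by_cases hk : k ∈ s
        · exact hg k (by have := hM k hk; push_cast; omega)
        · exact (hs k hk).eq_of_tgt _ _
      exact ⟨Homotopy.ofEq this⟩
    | succ n ih =>
      intro g hg
      set N : ℤ := M - n with hN
      have hgN : ∀ k : ℤ, k < N → g.f k = 0 := fun k hk => hg k (by push_cast; omega)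
      have hc : X.d (N - 1) N ≫ g.f N = 0 := by
        rw [← g.comm (N - 1) N, hgN (N - 1) (by omega), zero_comp]
      obtain ⟨ψ, hψ⟩ := htot (Q.X N) (hQp N) N (g.f N) hc
      -- the one-step homotopy
      set hom : ∀ i j, X.X i ⟶ Q.X j := fun i j =>
        if hij : i = N + 1 ∧ j = N then
          (X.XIsoOfEq hij.1).hom ≫ ψ ≫ (Q.XIsoOfEq hij.2.symm).hom
        else 0 with hhom
      have hzero : ∀ i j, ¬ (ComplexShape.up ℤ).Rel j i → hom i j = 0 := by
        intro i j hij
        simp only [hhom]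
        rw [dif_neg]
        rintro ⟨rfl, rfl⟩
        exact hij rfl
      set c : X ⟶ Q := Homotopy.nullHomotopicMap hom with hcdef
      have hcf : ∀ k : ℤ, c.f k = X.d k (k + 1) ≫ hom (k + 1) k + hom k (k - 1) ≫ Q.d (k - 1) k := by
        intro k
        exact Homotopy.nullHomotopicMap_f
          (show (ComplexShape.up ℤ).Rel (k - 1) k by simp)
          (show (ComplexShape.up ℤ).Rel k (k + 1) by simp) hom
      have hcN : c.f N = g.f N := by
        rw [hcf]
        have h1 : hom (N + 1) N = ψ := by
          rw [hhom]
          beta_reduce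
          rw [dif_pos ⟨rfl, rfl⟩]
          simp [HomologicalComplex.XIsoOfEq]
        have h2 : hom N (N - 1) = 0 := by
          simp only [hhom]
          rw [dif_neg]
          rintro ⟨h, -⟩; omega
        rw [h1, h2, hψ, zero_comp, add_zero]
      have hclt : ∀ k : ℤ, k < N → c.f k = 0 := by
        intro k hk
        rw [hcf]
        have h1 : hom (k + 1) k = 0 := by
          simp only [hhom]
          rw [dif_neg]
          rintro ⟨h, -⟩; omega
        have h2 : hom k (k - 1) = 0 := by
          simp only [hhom]
          rw [dif_neg]
          rintro ⟨h, -⟩; omega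
        rw [h1, h2, comp_zero, zero_comp, add_zero]
      have hch : Homotopy c 0 := Homotopy.nullHomotopy hom hzero
      obtain ⟨h'⟩ := ih (g - c) (by
        intro k hk
        have hk' : k ≤ N := by push_cast at hk; omega
        simp only [HomologicalComplex.sub_f_apply]
        rcases eq_or_lt_of_le hk' with rfl | hlt
        · rw [hcN, sub_self]
        · rw [hgN k hlt, hclt k hlt, sub_self])
      exact ⟨(Homotopy.ofEq (by abel)).trans ((h'.add hch).trans (Homotopy.ofEq (by simp)))⟩
  -- apply the key claim with a large enough `n`
  refine key (M + 1 + m').toNat f ?_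
  intro k hk
  have hk' : k < -m' := by
    have := Int.self_le_toNat (M + 1 + m')
    omega
  have hks : k ∉ s := fun h => by have := hm k h; omega
  exact (hs k hks).eq_of_tgt _ _
end

section
/- Let C be an abelian category and let 0 → X → Y → Z → 0 be a degreewise short exact sequence of cochain complexes over C indexed by ℤ. Fix n ∈ ℤ and assume that X, Y and Z are all exact at position n (their homology at n vanishes). Then the induced sequence 0 → Z^n(X) → Z^n(Y) → Z^n(Z) → 0 of n-cocycle objects (kernels of the n-th differentials, with the induced maps) is short exact. -/
open CategoryTheory CategoryTheory.Limits

/-- Given a degreewise short exact sequence `0 → X → Y → Z → 0` of cochain complexes over an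
abelian category, all exact at position `n`, the induced sequence of `n`-cocycle objects
`0 → Zⁿ(X) → Zⁿ(Y) → Zⁿ(Z) → 0` is short exact. -/
theorem stmt_4 {C : Type*} [Category C] [Abelian C]
    {X Y Z : CochainComplex C ℤ} (f : X ⟶ Y) (g : Y ⟶ Z) (hfg : f ≫ g = 0)
    (hses : ∀ i : ℤ, (ShortComplex.mk (f.f i) (g.f i)
      (by simpa using congrArg (fun φ => HomologicalComplex.Hom.f φ i) hfg)).ShortExact)
    (n : ℤ) (hX : X.ExactAt n) (hY : Y.ExactAt n) (hZ : Z.ExactAt n) :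
    (ShortComplex.mk (HomologicalComplex.cyclesMap f n) (HomologicalComplex.cyclesMap g n)
      (by rw [← HomologicalComplex.cyclesMap_comp, hfg,
        HomologicalComplex.cyclesMap_zero])).ShortExact := by
  set S : ShortComplex (CochainComplex C ℤ) := ShortComplex.mk f g hfg with hSdef
  have hS : S.ShortExact :=
    HomologicalComplex.shortExact_of_degreewise_shortExact S (fun i => hses i)
  have := hS.mono_f
  have := hS.epi_g
  -- epi of g on the (n-1)-th level
  have hgepi : Epi (g.f (n - 1)) := (hses (n - 1)).epi_g
  -- `Z.toCycles (n-1) n` is epi since `Z` is exact at `n`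
  have hprev : (ComplexShape.up ℤ).prev n = n - 1 := by simp
  have hnext : (ComplexShape.up ℤ).next n = n + 1 := by simp
  have hZexact' : (Z.sc' (n - 1) n (n + 1)).Exact := by
    rwa [← HomologicalComplex.exactAt_iff' Z (n - 1) n (n + 1) hprev hnext]
  have hZepi' : Epi (Z.toCycles (n - 1) n) := by
    have h1 : Epi ((Z.sc' (n - 1) n (n + 1)).toCycles) := hZexact'.epi_toCycles
    have h2 : Z.toCycles (n - 1) n =
        (Z.sc' (n - 1) n (n + 1)).toCycles ≫
          (Z.cyclesIsoSc' (n - 1) n (n + 1) hprev hnext).inv := by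
      refine (cancel_mono (Z.iCycles n)).1 ?_
      refine Eq.trans ?_ (Category.assoc _ _ _).symm
      rw [
        HomologicalComplex.cyclesIsoSc'_inv_iCycles, HomologicalComplex.toCycles_i]
      exact (ShortComplex.toCycles_i (Z.sc' (n - 1) n (n + 1))).symm
    rw [h2]
    exact @epi_comp _ _ _ _ _ _ h1 _ _
  -- naturality
  have hnat : Y.toCycles (n - 1) n ≫ HomologicalComplex.cyclesMap g n =
      g.f (n - 1) ≫ Z.toCycles (n - 1) n := by
    rw [← cancel_mono (Z.iCycles n)]
    simp [HomologicalComplex.cyclesMap_i]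
  have hepi : Epi (HomologicalComplex.cyclesMap g n) := by
    have : Epi (g.f (n - 1) ≫ Z.toCycles (n - 1) n) := epi_comp _ _
    rw [← hnat] at this
    exact epi_of_epi (Y.toCycles (n - 1) n) _
  exact
    { exact := HomologicalComplex.cycles_left_exact S hS.exact n
      mono_f := by
        have : Mono (HomologicalComplex.cyclesMap S.f n) := inferInstance
        exact this
      epi_g := hepi }
end

section
/- Let C be a category with zero morphisms. Consider morphisms w' : B → M, v : M → E, w : M → F with w' a monomorphism, let v' : C → M be a kernel of v, let x' : K → C be a kernel of x := w ∘ v' : C → F, set y := v ∘ w' : B → E, and let y' : K → B be a morphism satisfying w' ∘ y' = v' ∘ x'. If w ∘ w' = 0, then y' is a kernel of y. -/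
open CategoryTheory CategoryTheory.Limits

/-- In a category with zero morphisms, given `w' : B ⟶ M` a monomorphism, `v : M ⟶ E`,
`w : M ⟶ F`, a kernel `v'` of `v`, a kernel `x'` of `x = w ∘ v'`, and `y' : K ⟶ B` with
`w' ∘ y' = v' ∘ x'`, if `w ∘ w' = 0` then `y'` is a kernel of `y = v ∘ w'`. -/
theorem stmt_5 {C : Type*} [Category C] [HasZeroMorphisms C]
    {B M E F D K : C}
    (w' : B ⟶ M) (v : M ⟶ E) (w : M ⟶ F) [Mono w']
    (v' : D ⟶ M) (hv'0 : v' ≫ v = 0)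
    (hv' : IsLimit (KernelFork.ofι v' hv'0))
    (x' : K ⟶ D) (hx'0 : x' ≫ (v' ≫ w) = 0)
    (hx' : IsLimit (KernelFork.ofι x' hx'0))
    (y' : K ⟶ B) (hy' : y' ≫ w' = x' ≫ v')
    (hww' : w' ≫ w = 0) :
    Nonempty (IsLimit (KernelFork.ofι y' (show y' ≫ (w' ≫ v) = 0 by
      rw [← Category.assoc, hy', Category.assoc, hv'0, comp_zero]))) := by
  have key : ∀ {T : C} (t : T ⟶ B), t ≫ (w' ≫ v) = 0 →
      {l : T ⟶ K // l ≫ y' = t} := by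
    intro T t ht
    obtain ⟨u, hu⟩ := KernelFork.IsLimit.lift' hv' (t ≫ w')
      (by rw [Category.assoc, ht])
    simp only [Fork.ι_ofι] at hu
    obtain ⟨l, hl⟩ := KernelFork.IsLimit.lift' hx' u
      (by rw [← Category.assoc, hu, Category.assoc, hww', comp_zero])
    simp only [Fork.ι_ofι] at hl
    refine ⟨l, (cancel_mono w').1 ?_⟩
    rw [Category.assoc, hy', ← Category.assoc, hl, hu]
  have hx'm : Mono x' := mono_of_isLimit_fork hx'
  have hv'm : Mono v' := mono_of_isLimit_fork hv'
  have : Mono y' := by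
    constructor
    intro Z g h hgh
    have : g ≫ (y' ≫ w') = h ≫ (y' ≫ w') := by
      rw [← Category.assoc, hgh, Category.assoc]
    rw [hy', ← Category.assoc, ← Category.assoc] at this
    exact (cancel_mono x').1 ((cancel_mono v').1 this)
  exact ⟨KernelFork.IsLimit.ofι _ _ (fun t ht => (key t ht).1)
    (fun t ht => (key t ht).2)
    (fun t ht l hl => (cancel_mono y').1 (by rw [hl, (key t ht).2]) )⟩
end

section
/- Let C be a preadditive category. Consider a commutative diagram with rows r : A → B, s : B → C and r' : A' → B', s' : B' → C', and vertical morphisms a : A → A', b : B → B', c : C → C' (so b ∘ r = r' ∘ a and c ∘ s = s' ∘ b). (1) Suppose the binary biproduct B ⊕ A' exists. If the outer rectangle (with horizontal edges s ∘ r and s' ∘ r') is a pushout square and the morphism B ⊕ A' → B' with components b and r' is an epimorphism, then the right-hand square (on s, b, c, s') is a pushout. (2) Dually, suppose C ⊕ B' exists. If the outer rectangle is a pullback square and the morphism B → C ⊕ B' with components s and b is a monomorphism, then the left-hand square (on r, a, b, r') is a pullback. -/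
open CategoryTheory CategoryTheory.Limits

/-- In a preadditive category, consider a commutative ladder with rows `r : A ⟶ B`,
`s : B ⟶ C₀` and `r' : A' ⟶ B'`, `s' : B' ⟶ C''` and verticals `a`, `b`, `c`.
(1) If the outer rectangle is a pushout and `(b, r') : B ⊞ A' ⟶ B'` is an epimorphism, then
the right-hand square is a pushout.
(2) If the outer rectangle is a pullback and `(s, b) : B ⟶ C₀ ⊞ B'` is a monomorphism, then
the left-hand square is a pullback. -/
theorem stmt_7 {C : Type*} [Category C] [Preadditive C]
    {A B C₀ A' B' C'' : C}
    (r : A ⟶ B) (s : B ⟶ C₀) (r' : A' ⟶ B') (s' : B' ⟶ C'')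
    (a : A ⟶ A') (b : B ⟶ B') (c : C₀ ⟶ C'')
    (h1 : r ≫ b = a ≫ r') (h2 : s ≫ c = b ≫ s')
    [HasBinaryBiproduct B A'] [HasBinaryBiproduct C₀ B'] :
    (IsPushout (r ≫ s) a c (r' ≫ s') → Epi (biprod.desc b r') → IsPushout s b c s') ∧
    (IsPullback (r ≫ s) a c (r' ≫ s') → Mono (biprod.lift s b) → IsPullback r a b r') := by
  constructor
  · intro H he
    refine ⟨⟨h2⟩, ⟨PushoutCocone.IsColimit.mk h2
      (fun sc => H.desc sc.inl (r' ≫ sc.inr) ?_) (fun sc => H.inl_desc _ _ _)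
      (fun sc => ?_) (fun sc m hm1 hm2 => ?_)⟩⟩
    · rw [Category.assoc, sc.condition, ← Category.assoc, h1, Category.assoc]
    · apply (cancel_epi (biprod.desc b r')).mp
      apply biprod.hom_ext' <;> simp only [biprod.inl_desc_assoc, biprod.inr_desc_assoc]
      · rw [← Category.assoc, ← h2, Category.assoc, H.inl_desc, sc.condition]
      · rw [← Category.assoc, H.inr_desc]
    · apply H.hom_ext
      · rw [H.inl_desc, hm1]
      · rw [H.inr_desc, Category.assoc, hm2]
  · intro H hm
    refine ⟨⟨h1⟩, ⟨PullbackCone.IsLimit.mk h1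
      (fun sc => H.lift (sc.fst ≫ s) sc.snd ?_) (fun sc => ?_)
      (fun sc => H.lift_snd _ _ _) (fun sc m hm1 hm2 => ?_)⟩⟩
    · rw [Category.assoc, h2, ← Category.assoc, sc.condition, Category.assoc]
    · apply (cancel_mono (biprod.lift s b)).mp
      apply biprod.hom_ext <;> simp only [Category.assoc, biprod.lift_fst, biprod.lift_snd]
      · exact H.lift_fst _ _ _
      · simp only [h1]
        rw [← Category.assoc, H.lift_snd, sc.condition]
    · apply H.hom_ext
      · rw [H.lift_fst, ← Category.assoc, hm1]
      · rw [H.lift_snd, hm2]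
end

section
/- Let C be an abelian category. Consider a commutative diagram consisting of morphisms f : L → M, h : L → N, e : M → P, k : N → P (with e ∘ f = k ∘ h), and i : M → T, g : T → R, m : P → R (with g ∘ i = m ∘ e), where i is a monomorphism and e is an epimorphism. If the outer square with sides i ∘ f : L → T, h : L → N, g : T → R, m ∘ k : N → R is bicartesian (both a pushout and a pullback), then the square on (i, e, g, m) is bicartesian and the square on (f, h, e, k) is bicartesian. -/
open CategoryTheory CategoryTheory.Limits

section Aux

variable {C : Type*} [Category C] [Abelian C]

/-- In an abelian category, a pushout square whose top map is a mono is also a pullback. -/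
theorem aux_isPullback_of_isPushout_of_mono {M T P R : C} {i : M ⟶ T} {e : M ⟶ P}
    {g : T ⟶ R} {m : P ⟶ R} [Mono i] (hpo : IsPushout i e g m) : IsPullback i e g m := by
  have hqp : biprod.lift i (-e) ≫ biprod.desc g m = 0 := by
    simp [hpo.w]
  have hqmono : Mono (biprod.lift i (-e)) :=
    mono_of_mono_fac (show biprod.lift i (-e) ≫ biprod.fst = i by simp)
  -- `biprod.desc g m` is a cokernel of `biprod.lift i (-e)`
  have hcolim : IsColimit (CokernelCofork.ofπ (biprod.desc g m) hqp) := by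
    refine Cofork.IsColimit.mk _
      (fun s => hpo.desc (biprod.inl ≫ s.π) (biprod.inr ≫ s.π) ?_)
      (fun s => ?_) (fun s w hw => ?_)
    · have h0 : i ≫ biprod.inl ≫ s.π - e ≫ biprod.inr ≫ s.π = 0 := by
        simpa [biprod.lift_eq, sub_eq_add_neg] using s.condition
      exact sub_eq_zero.mp h0
    · apply biprod.hom_ext' <;> simp
    · apply hpo.hom_ext
      · simpa using biprod.inl ≫= hw
      · simpa using biprod.inr ≫= hw
  -- hence `biprod.lift i (-e)` is a kernel of `biprod.desc g m`
  have hker : IsLimit (KernelFork.ofι (biprod.lift i (-e))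
      (CokernelCofork.condition (CokernelCofork.ofπ (biprod.desc g m) hqp))) :=
    Abelian.monoIsKernelOfCokernel _ hcolim
  refine IsPullback.of_isLimit
    (PullbackCone.IsLimit.mk hpo.w (fun s => ?_) (fun s => ?_) (fun s => ?_)
      (fun s w h1 h2 => ?_))
  · refine (Fork.IsLimit.lift' hker (biprod.lift s.fst (-s.snd)) ?_).1
    simp [s.condition]
  · have hfac := (Fork.IsLimit.lift' hker (biprod.lift s.fst (-s.snd)) (by simp [s.condition])).2
    simpa using hfac =≫ biprod.fst
  · have hfac := (Fork.IsLimit.lift' hker (biprod.lift s.fst (-s.snd)) (by simp [s.condition])).2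
    have h2 := hfac =≫ biprod.snd
    simp only [Category.assoc, biprod.lift_snd, Fork.ι_ofι, Preadditive.comp_neg] at h2
    exact neg_inj.mp h2
  · have hfac := (Fork.IsLimit.lift' hker (biprod.lift s.fst (-s.snd)) (by simp [s.condition])).2
    have hfst := hfac =≫ biprod.fst
    simp only [Category.assoc, biprod.lift_fst, Fork.ι_ofι] at hfst
    rw [← cancel_mono i, h1]
    exact hfst.symm

/-- In an abelian category, a pullback square whose bottom-right map is an epi is also
a pushout. -/
theorem aux_isPushout_of_isPullback_of_epi {L M N P : C} {f : L ⟶ M} {h : L ⟶ N}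
    {e : M ⟶ P} {k : N ⟶ P} [Epi e] (hpb : IsPullback f h e k) : IsPushout f h e k := by
  have : Mono e.op := inferInstance
  exact ((aux_isPullback_of_isPushout_of_mono hpb.flip.op).unop).flip

end Aux

/-- In an abelian category, given a commutative diagram of two stacked squares with `i` a
monomorphism and `e` an epimorphism, if the outer square is bicartesian then both inner
squares are bicartesian. -/
theorem stmt_8 {C : Type*} [Category C] [Abelian C]
    {L M N P T R : C}
    (f : L ⟶ M) (h : L ⟶ N) (e : M ⟶ P) (k : N ⟶ P)
    (i : M ⟶ T) (g : T ⟶ R) (m : P ⟶ R)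
    [Mono i] [Epi e]
    (c1 : f ≫ e = h ≫ k) (c2 : i ≫ g = e ≫ m)
    (hpo : IsPushout (f ≫ i) h g (k ≫ m)) (hpb : IsPullback (f ≫ i) h g (k ≫ m)) :
    (IsPushout i e g m ∧ IsPullback i e g m) ∧
    (IsPushout f h e k ∧ IsPullback f h e k) := by
  -- first: the right square `(i, e, g, m)` is a pushout.
  have po1 : IsPushout i e g m := by
    refine IsPushout.of_isColimit
      (PushoutCocone.IsColimit.mk c2 (fun s => ?_) (fun s => ?_) (fun s => ?_)
        (fun s w h1 h2 => ?_))
    · refine hpo.desc s.inl (k ≫ s.inr) ?_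
      rw [Category.assoc, s.condition, reassoc_of% c1]
    · exact hpo.inl_desc _ _ _
    · beta_reduce
      rw [← cancel_epi e, ← reassoc_of% c2, hpo.inl_desc, s.condition]
    · beta_reduce
      apply hpo.hom_ext
      · rw [hpo.inl_desc]; exact h1
      · rw [hpo.inr_desc, Category.assoc, h2]
  have pb1 : IsPullback i e g m := aux_isPullback_of_isPushout_of_mono po1
  have pb2 : IsPullback f h e k := hpb.of_right c1 pb1
  have po2 : IsPushout f h e k := aux_isPushout_of_isPullback_of_epi pb2
  exact ⟨⟨po1, pb1⟩, ⟨po2, pb2⟩⟩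
end

section
/- (Schanuel's Lemma) Let C be an abelian category. Given two short exact sequences 0 → Z → P → X → 0 and 0 → Z' → P' → X → 0 in C with the same cokernel object X and with P and P' projective, there is an isomorphism Z ⊕ P' ≅ Z' ⊕ P. -/
open CategoryTheory CategoryTheory.Limits

lemma schanuel_aux {C : Type*} [Category C] [Abelian C] {Z P X P' : C}
    (i : Z ⟶ P) (p : P ⟶ X) (w : i ≫ p = 0) (p' : P' ⟶ X)
    (hS : (ShortComplex.mk i p w).ShortExact) [Epi p'] [Projective P'] :
    Nonempty (pullback p p' ≅ Z ⊞ P') := by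
  have hmono : Mono i := hS.mono_f
  have hepi : Epi p := hS.epi_g
  let j : Z ⟶ pullback p p' := pullback.lift i 0 (by simp [w])
  have hjf : j ≫ pullback.fst p p' = i := pullback.lift_fst _ _ _
  have hjs : j ≫ pullback.snd p p' = 0 := pullback.lift_snd _ _ _
  have hmj : Mono j := by
    have : Mono (j ≫ pullback.fst p p') := by rw [hjf]; infer_instance
    exact mono_of_mono j (pullback.fst p p')
  have hker : IsLimit (KernelFork.ofι j hjs) := by
    refine KernelFork.IsLimit.ofι' j hjs (fun {A} k hk => ?_)
    have cond : (k ≫ pullback.fst p p') ≫ p = 0 := by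
      rw [Category.assoc, pullback.condition, ← Category.assoc, hk, zero_comp]
    obtain ⟨l, hl⟩ := KernelFork.IsLimit.lift' hS.fIsKernel (k ≫ pullback.fst p p') cond
    refine ⟨l, ?_⟩
    apply pullback.hom_ext
    · rw [Category.assoc, hjf]; exact hl
    · rw [Category.assoc, hjs, comp_zero, hk]
  have hexact : (ShortComplex.mk j (pullback.snd p p') hjs).Exact :=
    ShortComplex.exact_of_f_is_kernel _ hker
  have hSE : (ShortComplex.mk j (pullback.snd p p') hjs).ShortExact :=
    ShortComplex.ShortExact.mk' hexact hmj inferInstance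
  exact ⟨hSE.splittingOfProjective.isoBinaryBiproduct⟩

/-- Schanuel's Lemma: given short exact sequences `0 → Z → P → X → 0` and
`0 → Z' → P' → X → 0` in an abelian category with `P` and `P'` projective, we have
`Z ⊞ P' ≅ Z' ⊞ P`. -/
theorem stmt_10 {C : Type*} [Category C] [Abelian C]
    {Z P X Z' P' : C}
    (i : Z ⟶ P) (p : P ⟶ X) (w : i ≫ p = 0)
    (i' : Z' ⟶ P') (p' : P' ⟶ X) (w' : i' ≫ p' = 0)
    (hS : (ShortComplex.mk i p w).ShortExact)
    (hS' : (ShortComplex.mk i' p' w').ShortExact)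
    [Projective P] [Projective P'] :
    Nonempty ((Z ⊞ P') ≅ (Z' ⊞ P)) := by
  have hepi : Epi p := hS.epi_g
  have hepi' : Epi p' := hS'.epi_g
  obtain ⟨e₁⟩ := schanuel_aux i p w p' hS
  obtain ⟨e₂⟩ := schanuel_aux i' p' w' p hS'
  exact ⟨e₁.symm ≪≫ pullbackSymmetry p p' ≪≫ e₂⟩
end
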